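/- arXiv:0805.1650 — 2 statements merged into one kernel-verified Lean document; each statement's English description precedes it below -/
import Mathlib

section
/- Assume ω is total, i.e. the linear span of {ω(A,B) : A,B ∈ H} equals 𝐂. Then for every ε₀ > 0 there exists γ(ε₀) > 0 such that for every (A,a) ∈ 𝔤_CM with d(e,(A,a)) ≥ ε₀ one has γ(ε₀) (‖A‖_H + sqrt(‖a‖_𝐂)) ≤ d(e,(A,a)). -/
/-!
Along a `C¹` path of length `ℓ` from the identity, `‖w'‖` and the vertical velocity
`‖c' - ½ ω(w, w')‖` both integrate to at most `ℓ`, so `‖w‖ ≤ ℓ` throughout and hence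
`‖c(1)‖ ≤ ℓ + ‖ω‖ ℓ² / 2`. Once `ℓ ≥ ε₀` the linear term is dominated by `ℓ² / ε₀`, so
`√‖a‖ ≤ √(1/ε₀ + ‖ω‖/2) · ℓ`; taking the infimum over paths gives the bound with
`γ = (1 + √(1/ε₀ + ‖ω‖/2))⁻¹`.
-/

open MeasureTheory

/-- The length of the `C¹` path `s ↦ (w s, c s)`, `0 ≤ s ≤ 1`, with respect to the
left invariant Riemannian metric on the Heisenberg type group determined by `ω`. -/
noncomputable def pathLen {H C : Type*} [NormedAddCommGroup H] [InnerProductSpace ℝ H]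
    [NormedAddCommGroup C] [InnerProductSpace ℝ C]
    (ω : H →L[ℝ] H →L[ℝ] C) (w : ℝ → H) (c : ℝ → C) : ℝ :=
  ∫ s in (0:ℝ)..1,
    Real.sqrt (‖deriv w s‖ ^ 2 + ‖deriv c s - (2:ℝ)⁻¹ • ω (w s) (deriv w s)‖ ^ 2)

/-- The left invariant Riemannian distance on `𝔤_CM = H × 𝐂`:  the infimum of the lengths of
`C¹` paths joining `x` to `y`. -/
noncomputable def dCM {H C : Type*} [NormedAddCommGroup H] [InnerProductSpace ℝ H]
    [NormedAddCommGroup C] [InnerProductSpace ℝ C]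
    (ω : H →L[ℝ] H →L[ℝ] C) (x y : H × C) : ℝ :=
  sInf {L : ℝ | ∃ w : ℝ → H, ∃ c : ℝ → C, ContDiff ℝ 1 w ∧ ContDiff ℝ 1 c ∧
    w 0 = x.1 ∧ c 0 = x.2 ∧ w 1 = y.1 ∧ c 1 = y.2 ∧ L = pathLen ω w c}

open Set intervalIntegral

lemma norm_sub_le_integral_norm_deriv {E : Type*} [NormedAddCommGroup E] [NormedSpace ℝ E]
    {f : ℝ → E} (hf : ContDiff ℝ 1 f) {a b : ℝ} (hab : a ≤ b) :
    ‖f b - f a‖ ≤ ∫ t in a..b, ‖deriv f t‖ :=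
  image_norm_le_of_norm_deriv_right_le_deriv_boundary (f := fun x => f x - f a)
    (hf.continuous.sub continuous_const).continuousOn
    (fun x _ => ((hf.differentiable one_ne_zero x).hasDerivAt.sub_const _).hasDerivWithinAt)
    (by simp) ((hf.continuous_deriv le_rfl).norm.integral_hasStrictDerivAt a · |>.hasDerivAt)
    (fun _ _ => le_rfl) (right_mem_Icc.2 hab)

lemma integral_le_integral_sqrt_sq_add_sq {x y : ℝ → ℝ} (hx : Continuous x) (hy : Continuous y)
    {a b : ℝ} (hab : a ≤ b) :
    ∫ t in a..b, x t ≤ ∫ t in a..b, √(x t ^ 2 + y t ^ 2) :=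
  integral_mono_on hab (hx.intervalIntegrable _ _) (Continuous.intervalIntegrable (by fun_prop) _ _)
    fun t _ => (le_abs_self _).trans (Real.abs_le_sqrt (le_add_of_nonneg_right (sq_nonneg _)))

section PathLength

variable {H C : Type*} [NormedAddCommGroup H] [InnerProductSpace ℝ H]
  [NormedAddCommGroup C] [InnerProductSpace ℝ C]
  (ω : H →L[ℝ] H →L[ℝ] C) {w : ℝ → H} {c : ℝ → C}

lemma pathLen_nonneg (w : ℝ → H) (c : ℝ → C) : 0 ≤ pathLen ω w c :=
  integral_nonneg zero_le_one fun _ _ => Real.sqrt_nonneg _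

lemma integral_norm_deriv_le_pathLen (hw : ContDiff ℝ 1 w) (hc : ContDiff ℝ 1 c) :
    ∫ t in (0:ℝ)..1, ‖deriv w t‖ ≤ pathLen ω w c := by
  have := hw.continuous_deriv le_rfl
  have := hc.continuous_deriv le_rfl
  exact integral_le_integral_sqrt_sq_add_sq (by fun_prop) (by fun_prop) zero_le_one

lemma integral_norm_vertical_le_pathLen (hw : ContDiff ℝ 1 w) (hc : ContDiff ℝ 1 c) :
    ∫ t in (0:ℝ)..1, ‖deriv c t - (2:ℝ)⁻¹ • ω (w t) (deriv w t)‖ ≤ pathLen ω w c := by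
  have := hw.continuous
  have := hw.continuous_deriv le_rfl
  have := hc.continuous_deriv le_rfl
  simpa only [pathLen, add_comm (‖deriv w _‖ ^ 2)] using
    integral_le_integral_sqrt_sq_add_sq (by fun_prop) (by fun_prop) zero_le_one

lemma norm_sub_le_pathLen (hw : ContDiff ℝ 1 w) (hc : ContDiff ℝ 1 c) {s : ℝ}
    (hs : s ∈ Icc (0:ℝ) 1) : ‖w s - w 0‖ ≤ pathLen ω w c :=
  calc ‖w s - w 0‖ ≤ ∫ t in (0:ℝ)..s, ‖deriv w t‖ := norm_sub_le_integral_norm_deriv hw hs.1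
    _ ≤ ∫ t in (0:ℝ)..1, ‖deriv w t‖ :=
      integral_mono_interval le_rfl hs.1 hs.2 (.of_forall fun _ => norm_nonneg _)
        ((hw.continuous_deriv le_rfl).norm.intervalIntegrable _ _)
    _ ≤ pathLen ω w c := integral_norm_deriv_le_pathLen ω hw hc

lemma norm_center_sub_le_pathLen (hw : ContDiff ℝ 1 w) (hc : ContDiff ℝ 1 c) (hw0 : w 0 = 0) :
    ‖c 1 - c 0‖ ≤ pathLen ω w c + ‖ω‖ / 2 * pathLen ω w c ^ 2 := by
  set ℓ := pathLen ω w c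
  have hℓ : 0 ≤ ℓ := pathLen_nonneg ω w c
  have := hw.continuous
  have := hw.continuous_deriv le_rfl
  have := hc.continuous_deriv le_rfl
  have hderiv : ∀ t ∈ uIcc (0:ℝ) 1, ‖deriv c t‖ ≤
      ‖deriv c t - (2:ℝ)⁻¹ • ω (w t) (deriv w t)‖ + ‖ω‖ / 2 * ℓ * ‖deriv w t‖ := by
    intro t ht
    have hwt : ‖w t‖ ≤ ℓ := by
      simpa [hw0] using norm_sub_le_pathLen ω hw hc (by rwa [uIcc_of_le zero_le_one] at ht)
    have hω : ‖(2:ℝ)⁻¹ • ω (w t) (deriv w t)‖ ≤ ‖ω‖ / 2 * ℓ * ‖deriv w t‖ :=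
      calc ‖(2:ℝ)⁻¹ • ω (w t) (deriv w t)‖ ≤ 2⁻¹ * (‖ω‖ * ‖w t‖ * ‖deriv w t‖) := by
            rw [norm_smul, Real.norm_of_nonneg (by norm_num)]
            gcongr
            exact ω.le_opNorm₂ _ _
        _ = ‖ω‖ / 2 * ‖w t‖ * ‖deriv w t‖ := by ring
        _ ≤ ‖ω‖ / 2 * ℓ * ‖deriv w t‖ := by gcongr
    exact (norm_le_norm_sub_add _ _).trans (by gcongr)
  calc ‖c 1 - c 0‖ ≤ ∫ t in (0:ℝ)..1, ‖deriv c t‖ :=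
        norm_sub_le_integral_norm_deriv hc zero_le_one
    _ ≤ ∫ t in (0:ℝ)..1, (‖deriv c t - (2:ℝ)⁻¹ • ω (w t) (deriv w t)‖
          + ‖ω‖ / 2 * ℓ * ‖deriv w t‖) :=
        integral_mono_on zero_le_one (Continuous.intervalIntegrable (by fun_prop) _ _)
          (Continuous.intervalIntegrable (by fun_prop) _ _) fun t ht => hderiv t (by simpa using ht)
    _ = (∫ t in (0:ℝ)..1, ‖deriv c t - (2:ℝ)⁻¹ • ω (w t) (deriv w t)‖)
          + ‖ω‖ / 2 * ℓ * ∫ t in (0:ℝ)..1, ‖deriv w t‖ := by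
        rw [intervalIntegral.integral_add (Continuous.intervalIntegrable (by fun_prop) _ _)
          (Continuous.intervalIntegrable (by fun_prop) _ _), intervalIntegral.integral_const_mul]
    _ ≤ ℓ + ‖ω‖ / 2 * ℓ * ℓ := by
        gcongr ?_ + _ * ?_
        · exact integral_norm_vertical_le_pathLen ω hw hc
        · exact integral_norm_deriv_le_pathLen ω hw hc
    _ = ℓ + ‖ω‖ / 2 * ℓ ^ 2 := by ring

lemma dCM_le_pathLen {x y : H × C} (hw : ContDiff ℝ 1 w) (hc : ContDiff ℝ 1 c)
    (hw0 : w 0 = x.1) (hc0 : c 0 = x.2) (hw1 : w 1 = y.1) (hc1 : c 1 = y.2) :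
    dCM ω x y ≤ pathLen ω w c :=
  csInf_le ⟨0, by rintro _ ⟨w, c, -, -, -, -, -, -, rfl⟩; exact pathLen_nonneg ω w c⟩
    ⟨w, c, hw, hc, hw0, hc0, hw1, hc1, rfl⟩

lemma le_dCM {x y : H × C} {r : ℝ}
    (h : ∀ (w : ℝ → H) (c : ℝ → C), ContDiff ℝ 1 w → ContDiff ℝ 1 c → w 0 = x.1 → c 0 = x.2 →
      w 1 = y.1 → c 1 = y.2 → r ≤ pathLen ω w c) :
    r ≤ dCM ω x y := by
  refine le_csInf ⟨_, fun s => x.1 + s • (y.1 - x.1), fun s => x.2 + s • (y.2 - x.2),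
    by fun_prop, by fun_prop, by simp, by simp, by simp, by simp, rfl⟩ ?_
  rintro _ ⟨w, c, hw, hc, hw0, hc0, hw1, hc1, rfl⟩
  exact h w c hw hc hw0 hc0 hw1 hc1

end PathLength

lemma mul_add_sqrt_le_of_le_add_sq {ε ℓ k x y : ℝ} (hε : 0 < ε) (hεℓ : ε ≤ ℓ) (hk : 0 ≤ k)
    (hx : x ≤ ℓ) (hy : y ≤ ℓ + k * ℓ ^ 2) :
    (1 + √(ε⁻¹ + k))⁻¹ * (x + √y) ≤ ℓ := by
  have hℓ : 0 ≤ ℓ := hε.le.trans hεℓ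
  have hy' : y ≤ (ε⁻¹ + k) * ℓ ^ 2 := by
    have : ℓ ≤ ε⁻¹ * ℓ ^ 2 := by
      rw [← div_eq_inv_mul, le_div_iff₀ hε]; nlinarith
    linarith
  have hsqrt : √y ≤ √(ε⁻¹ + k) * ℓ := by
    calc √y ≤ √((ε⁻¹ + k) * ℓ ^ 2) := Real.sqrt_le_sqrt hy'
      _ = √(ε⁻¹ + k) * ℓ := by rw [Real.sqrt_mul (by positivity), Real.sqrt_sq hℓ]
  rw [inv_mul_le_iff₀ (by positivity)]
  linarith

theorem dist_lower_bound_of_total_general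
    {H C : Type*} [NormedAddCommGroup H] [InnerProductSpace ℝ H]
    [NormedAddCommGroup C] [InnerProductSpace ℝ C]
    (ω : H →L[ℝ] H →L[ℝ] C) :
    ∀ ε₀ : ℝ, 0 < ε₀ → ∃ γ : ℝ, 0 < γ ∧ ∀ (A : H) (a : C),
      ε₀ ≤ dCM ω ((0 : H), (0 : C)) (A, a) →
        γ * (‖A‖ + Real.sqrt ‖a‖) ≤ dCM ω ((0 : H), (0 : C)) (A, a) := by
  intro ε₀ hε₀
  refine ⟨(1 + √(ε₀⁻¹ + ‖ω‖ / 2))⁻¹, by positivity, fun A a hd => ?_⟩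
  refine le_dCM ω fun w c hw hc hw0 hc0 hw1 hc1 => ?_
  have hA := norm_sub_le_pathLen ω hw hc (right_mem_Icc.2 zero_le_one)
  have ha := norm_center_sub_le_pathLen ω hw hc hw0
  simp only at hw0 hc0 hw1 hc1
  rw [hw0, hw1, sub_zero] at hA
  rw [hc0, hc1, sub_zero] at ha
  exact mul_add_sqrt_le_of_le_add_sq hε₀ (hd.trans (dCM_le_pathLen ω hw hc hw0 hc0 hw1 hc1))
    (by positivity) hA ha

/-- If `ω` is total, then for every `ε₀ > 0` there is `γ(ε₀) > 0` such that
`γ(ε₀) (‖A‖_H + √‖a‖_𝐂) ≤ d(e,(A,a))` whenever `d(e,(A,a)) ≥ ε₀`. -/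
theorem dist_lower_bound_of_total
    {H C : Type*} [NormedAddCommGroup H] [InnerProductSpace ℝ H]
    [TopologicalSpace.SeparableSpace H]
    [NormedAddCommGroup C] [InnerProductSpace ℝ C] [FiniteDimensional ℝ C]
    (ω : H →L[ℝ] H →L[ℝ] C)
    (hskew : ∀ A B : H, ω A B = - ω B A)
    (htotal : Submodule.span ℝ {c : C | ∃ A B : H, ω A B = c} = ⊤) :
    ∀ ε₀ : ℝ, 0 < ε₀ → ∃ γ : ℝ, 0 < γ ∧ ∀ (A : H) (a : C),
      ε₀ ≤ dCM ω ((0 : H), (0 : C)) (A, a) →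
        γ * (‖A‖ + Real.sqrt ‖a‖) ≤ dCM ω ((0 : H), (0 : C)) (A, a) :=
  dist_lower_bound_of_total_general ω
end

section
/- Let 𝐂 be a finite-dimensional real inner product space and ω : X × X → 𝐂 a continuous skew-symmetric bilinear map with ‖ω‖₀ := sup{‖ω(w₁,w₂)‖_𝐂 : ‖w₁‖_X = ‖w₂‖_X = 1}, and set C₂ := ∫_X ‖x‖_X² dμ(x). Then (i) for every w ∈ X: Σ_{j=1}^∞ ‖ω(w,e_j)‖²_𝐂 ≤ C₂ ‖ω‖₀² ‖w‖_X², and (ii) Σ_{i,j=1}^∞ ‖ω(e_i,e_j)‖²_𝐂 = ∫_X ∫_X ‖ω(w,w′)‖²_𝐂 dμ(w) dμ(w′) ≤ ‖ω‖₀² C₂² < ∞. -/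
/-!
Both estimates come from one Parseval identity: for a continuous linear `T : X → C` into a
finite-dimensional inner product space, `Σ_j ‖T(e_j)‖² = ∫ ‖T x‖² dμ`. It follows from the
covariance hypothesis applied to the coordinate functionals `⟪b_k, T ·⟫` of an orthonormal basis
of `C`, the interchange of the finite sum over `k` with the series over `j` being licensed by
Bessel's inequality. Taking `T = ω w` and bounding `‖ω w x‖ ≤ ‖ω‖ ‖w‖ ‖x‖` gives (i). For (ii),
Parseval for `ω e_m` computes the rows of the double series and Parseval for `ω.flip x` identifies
the series of row integrals with the iterated integral; skew-symmetry makes the order of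
integration irrelevant.
-/

open MeasureTheory

theorem Orthonormal.sum_sq_apply_le_sq_opNorm {ι H : Type*} [NormedAddCommGroup H]
    [InnerProductSpace ℝ H] {e : ι → H} (he : Orthonormal ℝ e) (φ : H →L[ℝ] ℝ)
    (s : Finset ι) : ∑ j ∈ s, φ (e j) ^ 2 ≤ ‖φ‖ ^ 2 := by
  set v := ∑ j ∈ s, φ (e j) • e j
  have hv : ‖v‖ ^ 2 = ∑ j ∈ s, φ (e j) ^ 2 := by
    rw [← real_inner_self_eq_norm_sq, he.inner_sum]
    simp only [RCLike.conj_to_real, sq]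
  have hφv : φ v = ∑ j ∈ s, φ (e j) ^ 2 := by
    simp only [v, map_sum, map_smul, smul_eq_mul, sq]
  have hvφ : ‖v‖ ^ 2 ≤ ‖φ‖ * ‖v‖ := by
    rw [hv, ← hφv]
    exact (le_abs_self _).trans (φ.le_opNorm v)
  rw [← hv]
  nlinarith [norm_nonneg v, norm_nonneg φ]

theorem Orthonormal.summable_sq_apply {ι H : Type*} [NormedAddCommGroup H]
    [InnerProductSpace ℝ H] {e : ι → H} (he : Orthonormal ℝ e) (φ : H →L[ℝ] ℝ) :
    Summable fun j => φ (e j) ^ 2 :=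
  summable_of_sum_le (fun _ => sq_nonneg _) (he.sum_sq_apply_le_sq_opNorm φ)

theorem hasSum_prod_of_nonneg {α β : Type*} {f : α × β → ℝ} (hf : 0 ≤ f) {g : α → ℝ} {a : ℝ}
    (hrow : ∀ x, HasSum (fun y => f (x, y)) (g x)) (hg : HasSum g a) : HasSum f a := by
  have hsum : Summable f := (summable_prod_of_nonneg hf).2
    ⟨fun x => (hrow x).summable, by simpa only [(hrow _).tsum_eq] using hg.summable⟩
  rw [hg.unique (hsum.hasSum.prod_fiberwise hrow)]
  exact hsum.hasSum

theorem ContinuousLinearMap.norm_apply_sq_le {X E : Type*} [NormedAddCommGroup X]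
    [NormedSpace ℝ X] [NormedAddCommGroup E] [NormedSpace ℝ E] (T : X →L[ℝ] E) (x : X) :
    ‖T x‖ ^ 2 ≤ ‖T‖ ^ 2 * ‖x‖ ^ 2 := by
  rw [← mul_pow]
  gcongr
  exact T.le_opNorm x

section SecondMoment

variable {X E W : Type*} [NormedAddCommGroup X] [NormedSpace ℝ X] [MeasurableSpace X]
  [BorelSpace X] [NormedAddCommGroup E] [NormedSpace ℝ E] [NormedAddCommGroup W] [NormedSpace ℝ W]
  {μ : Measure X}

theorem ContinuousLinearMap.integrable_norm_apply_sq (hμ : Integrable (fun x => ‖x‖ ^ 2) μ)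
    (T : X →L[ℝ] E) : Integrable (fun x => ‖T x‖ ^ 2) μ :=
  (hμ.const_mul (‖T‖ ^ 2)).mono' (T.continuous.norm.pow 2).aestronglyMeasurable
    (ae_of_all _ fun x => by
      rw [Real.norm_of_nonneg (sq_nonneg _)]
      exact T.norm_apply_sq_le x)

theorem ContinuousLinearMap.integral_norm_apply_sq_le (hμ : Integrable (fun x => ‖x‖ ^ 2) μ)
    (T : X →L[ℝ] E) : ∫ x, ‖T x‖ ^ 2 ∂μ ≤ ‖T‖ ^ 2 * ∫ x, ‖x‖ ^ 2 ∂μ := by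
  rw [← integral_const_mul]
  exact integral_mono (T.integrable_norm_apply_sq hμ) (hμ.const_mul _) T.norm_apply_sq_le

theorem ContinuousLinearMap.integral_norm_apply_apply_sq_le
    (hμ : Integrable (fun x => ‖x‖ ^ 2) μ) (B : W →L[ℝ] X →L[ℝ] E) (w : W) :
    ∫ x, ‖B w x‖ ^ 2 ∂μ ≤ ‖B‖ ^ 2 * ‖w‖ ^ 2 * ∫ x, ‖x‖ ^ 2 ∂μ :=
  ((B w).integral_norm_apply_sq_le hμ).trans <| by
    gcongr
    rw [← mul_pow]
    gcongr
    exact B.le_opNorm w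

theorem ContinuousLinearMap.integral_norm_apply_apply_sq_le_left
    (hμ : Integrable (fun x => ‖x‖ ^ 2) μ) (B : X →L[ℝ] W →L[ℝ] E) (w : W) :
    ∫ x, ‖B x w‖ ^ 2 ∂μ ≤ ‖B‖ ^ 2 * ‖w‖ ^ 2 * ∫ x, ‖x‖ ^ 2 ∂μ :=
  B.opNorm_flip ▸ B.flip.integral_norm_apply_apply_sq_le hμ w

theorem ContinuousLinearMap.integral_integral_norm_apply_apply_sq_le
    (hμ : Integrable (fun x => ‖x‖ ^ 2) μ) (B : X →L[ℝ] X →L[ℝ] E) :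
    ∫ x, ∫ w, ‖B w x‖ ^ 2 ∂μ ∂μ ≤ ‖B‖ ^ 2 * (∫ x, ‖x‖ ^ 2 ∂μ) ^ 2 := by
  calc ∫ x, ∫ w, ‖B w x‖ ^ 2 ∂μ ∂μ ≤ ∫ x, ‖B‖ ^ 2 * (∫ x, ‖x‖ ^ 2 ∂μ) * ‖x‖ ^ 2 ∂μ := by
        refine integral_mono_of_nonneg (ae_of_all _ fun x => integral_nonneg fun _ => sq_nonneg _)
          (hμ.const_mul _) (ae_of_all _ fun x => ?_)
        linarith [B.integral_norm_apply_apply_sq_le_left hμ x]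
    _ = ‖B‖ ^ 2 * (∫ x, ‖x‖ ^ 2 ∂μ) ^ 2 := by rw [integral_const_mul]; ring

end SecondMoment

theorem hasSum_integral_of_nonneg_of_le {α ι : Type*} [MeasurableSpace α] [Countable ι]
    {μ : Measure α} {F : ι → α → ℝ} {G g : α → ℝ} (hF : ∀ n, Integrable (F n) μ)
    (hF₀ : ∀ n x, 0 ≤ F n x) (hFG : ∀ x, HasSum (F · x) (G x)) (hg : Integrable g μ)
    (hGg : ∀ x, G x ≤ g x) : HasSum (fun n => ∫ x, F n x ∂μ) (∫ x, G x ∂μ) := by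
  have hpartial (s : Finset ι) : ∑ n ∈ s, ∫ x, F n x ∂μ ≤ ∫ x, g x ∂μ := by
    rw [← integral_finsetSum s fun n _ => hF n]
    exact integral_mono (integrable_finsetSum s fun n _ => hF n) hg fun x =>
      (sum_le_hasSum s (fun n _ => hF₀ n x) (hFG x)).trans (hGg x)
  have hsum : Summable fun n => ∫ x, ‖F n x‖ ∂μ := by
    simp only [Real.norm_of_nonneg (hF₀ _ _)]
    exact summable_of_sum_le (fun n => integral_nonneg (hF₀ n)) hpartial
  simpa only [(hFG _).tsum_eq] using hasSum_integral_of_summable_integral_norm hF hsum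

section Parseval

variable {X C ι : Type*} [NormedAddCommGroup X] [NormedSpace ℝ X] [MeasurableSpace X]
  [BorelSpace X] [NormedAddCommGroup C] [InnerProductSpace ℝ C] [FiniteDimensional ℝ C]
  {μ : Measure X} {f : ι → X}

theorem hasSum_norm_apply_sq (hμ : Integrable (fun x => ‖x‖ ^ 2) μ)
    (hq : ∀ u : X →L[ℝ] ℝ, ∫ x, u x ^ 2 ∂μ = ∑' j, u (f j) ^ 2)
    (hsum : ∀ u : X →L[ℝ] ℝ, Summable fun j => u (f j) ^ 2) (T : X →L[ℝ] C) :
    HasSum (fun j => ‖T (f j)‖ ^ 2) (∫ x, ‖T x‖ ^ 2 ∂μ) := by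
  let b := stdOrthonormalBasis ℝ C
  let u (k : Fin (Module.finrank ℝ C)) : X →L[ℝ] ℝ := (innerSL ℝ (b k)).comp T
  have hnorm (x : X) : ‖T x‖ ^ 2 = ∑ k, u k x ^ 2 := (b.sum_sq_inner_right (T x)).symm
  have hcoord (k) : HasSum (fun j => u k (f j) ^ 2) (∫ x, u k x ^ 2 ∂μ) :=
    hq (u k) ▸ (hsum (u k)).hasSum
  have hint (k) : Integrable (fun x => u k x ^ 2) μ := by
    simpa only [Real.norm_eq_abs, sq_abs] using (u k).integrable_norm_apply_sq hμ
  simp only [hnorm]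
  rw [integral_finsetSum _ fun k _ => hint k]
  exact hasSum_sum fun k _ => hcoord k

theorem hasSum_norm_apply_apply_sq [Countable ι] (hμ : Integrable (fun x => ‖x‖ ^ 2) μ)
    (hq : ∀ u : X →L[ℝ] ℝ, ∫ x, u x ^ 2 ∂μ = ∑' j, u (f j) ^ 2)
    (hsum : ∀ u : X →L[ℝ] ℝ, Summable fun j => u (f j) ^ 2) (ω : X →L[ℝ] X →L[ℝ] C) :
    HasSum (fun p : ι × ι => ‖ω (f p.1) (f p.2)‖ ^ 2) (∫ x, ∫ w, ‖ω w x‖ ^ 2 ∂μ ∂μ) := by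
  refine hasSum_prod_of_nonneg (fun _ => sq_nonneg _)
    (fun m => hasSum_norm_apply_sq hμ hq hsum (ω (f m)))
    (hasSum_integral_of_nonneg_of_le (fun m => (ω (f m)).integrable_norm_apply_sq hμ)
    (fun _ _ => sq_nonneg _) (fun x => hasSum_norm_apply_sq hμ hq hsum (ω.flip x))
    (hμ.const_mul (‖ω‖ ^ 2 * ∫ x, ‖x‖ ^ 2 ∂μ)) fun x => by
      linarith [ω.integral_norm_apply_apply_sq_le_left hμ x])

end Parseval

theorem omega_hilbertSchmidt_estimates_general
    {X H C : Type*} [NormedAddCommGroup X] [NormedSpace ℝ X]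
    [MeasurableSpace X] [BorelSpace X]
    [NormedAddCommGroup H] [InnerProductSpace ℝ H]
    [NormedAddCommGroup C] [InnerProductSpace ℝ C] [FiniteDimensional ℝ C]
    (μ : Measure X)
    (hC2 : Integrable (fun x => ‖x‖ ^ 2) μ)
    (i : H →L[ℝ] X)
    (e : ℕ → H) (he : Orthonormal ℝ e)
    (hq : ∀ u : X →L[ℝ] ℝ, (∫ x, (u x) ^ 2 ∂μ) = ∑' j : ℕ, (u (i (e j))) ^ 2)
    (ω : X →L[ℝ] X →L[ℝ] C)
    (hskew : ∀ w₁ w₂ : X, ω w₁ w₂ = - ω w₂ w₁) :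
    (∀ w : X,
      (∑' j : ℕ, ‖ω w (i (e j))‖ ^ 2) ≤ (∫ x, ‖x‖ ^ 2 ∂μ) * ‖ω‖ ^ 2 * ‖w‖ ^ 2) ∧
    (∑' p : ℕ × ℕ, ‖ω (i (e p.1)) (i (e p.2))‖ ^ 2) =
      (∫ w, ∫ w', ‖ω w w'‖ ^ 2 ∂μ ∂μ) ∧
    (∑' p : ℕ × ℕ, ‖ω (i (e p.1)) (i (e p.2))‖ ^ 2) ≤
      ‖ω‖ ^ 2 * (∫ x, ‖x‖ ^ 2 ∂μ) ^ 2 := by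
  have hsum (u : X →L[ℝ] ℝ) : Summable fun j => u (i (e j)) ^ 2 :=
    he.summable_sq_apply (u.comp i)
  have hdouble := (hasSum_norm_apply_apply_sq hC2 hq hsum ω).tsum_eq
  have hsymm (w₁ w₂ : X) : ‖ω w₁ w₂‖ = ‖ω w₂ w₁‖ := by rw [hskew, norm_neg]
  refine ⟨fun w => ?_, ?_, hdouble ▸ ω.integral_integral_norm_apply_apply_sq_le hC2⟩
  · rw [(hasSum_norm_apply_sq hC2 hq hsum (ω w)).tsum_eq]
    linarith [ω.integral_norm_apply_apply_sq_le hC2 w]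
  · rw [hdouble]
    exact integral_congr_ae <| ae_of_all _ fun x =>
      integral_congr_ae <| ae_of_all _ fun w => by simp only [hsymm w x]

/-- Norm estimates for a continuous skew-symmetric bilinear `ω : X × X → 𝐂` over an abstract
Wiener-type space: (i) `Σ_j ‖ω(w,e_j)‖² ≤ C₂ ‖ω‖₀² ‖w‖²` for all `w ∈ X`, and
(ii) `Σ_{i,j} ‖ω(e_i,e_j)‖² = ∫∫ ‖ω(w,w′)‖² dμ(w) dμ(w′) ≤ ‖ω‖₀² C₂² < ∞`. -/
theorem omega_hilbertSchmidt_estimates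
    {X H C : Type*} [NormedAddCommGroup X] [NormedSpace ℝ X]
    [TopologicalSpace.SeparableSpace X] [MeasurableSpace X] [BorelSpace X]
    [NormedAddCommGroup H] [InnerProductSpace ℝ H] [TopologicalSpace.SeparableSpace H]
    [NormedAddCommGroup C] [InnerProductSpace ℝ C] [FiniteDimensional ℝ C]
    (μ : Measure X) [IsProbabilityMeasure μ]
    (hC2 : Integrable (fun x => ‖x‖ ^ 2) μ)
    (i : H →L[ℝ] X) (hi : Function.Injective i)
    (e : ℕ → H) (he : Orthonormal ℝ e)
    (hq : ∀ u : X →L[ℝ] ℝ, (∫ x, (u x) ^ 2 ∂μ) = ∑' j : ℕ, (u (i (e j))) ^ 2)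
    (ω : X →L[ℝ] X →L[ℝ] C)
    (hskew : ∀ w₁ w₂ : X, ω w₁ w₂ = - ω w₂ w₁) :
    (∀ w : X,
      (∑' j : ℕ, ‖ω w (i (e j))‖ ^ 2) ≤ (∫ x, ‖x‖ ^ 2 ∂μ) * ‖ω‖ ^ 2 * ‖w‖ ^ 2) ∧
    (∑' p : ℕ × ℕ, ‖ω (i (e p.1)) (i (e p.2))‖ ^ 2) =
      (∫ w, ∫ w', ‖ω w w'‖ ^ 2 ∂μ ∂μ) ∧
    (∑' p : ℕ × ℕ, ‖ω (i (e p.1)) (i (e p.2))‖ ^ 2) ≤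
      ‖ω‖ ^ 2 * (∫ x, ‖x‖ ^ 2 ∂μ) ^ 2 :=
  omega_hilbertSchmidt_estimates_general μ hC2 i e he hq ω hskew
end
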